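/- arXiv:2407.04987 — 3 statements merged into one kernel-verified Lean document; each statement's English description precedes it below -/
import Mathlib

section
/- Let H be a C² gauge on ℝ^N \ {0} whose sublevel set B^H_1(0) is uniformly convex, with associated constant λ > 0 such that ∂²_{ij}(H^N)(ξ)η_iη_j ≥ (1/λ)|ξ|^{N−2}|η|² and Σ_{i,j}|∂²_{ij}(H^N)(ξ)| ≤ λ|ξ|^{N−2} for all ξ ≠ 0, η ∈ ℝ^N. Then there exist constants c₁, c₂ > 0, depending only on N and λ, such that for all ξ₁, ξ₂ ∈ ℝ^N \ {0}: ⟨a(ξ₁) − a(ξ₂), ξ₁ − ξ₂⟩ ≥ c₁(|ξ₁| + |ξ₂|)^{N−2}|ξ₁ − ξ₂|² and |a(ξ₁) − a(ξ₂)| ≤ c₂(|ξ₁| + |ξ₂|)^{N−2}|ξ₁ − ξ₂|, where a(ξ) := H^{N−1}(ξ)∇H(ξ) = (1/N)∇(H^N)(ξ). -/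
/-!
Since `a = (1/N) ∇(H^N)`, both estimates concern the increment of `∇(H^N)` between `ξ₂` and `ξ₁`.
When the segment `[ξ₂, ξ₁]` avoids the origin, the mean value inequality with the Hessian upper
bound gives the Lipschitz estimate. For the monotonicity estimate, the second derivative of
`t ↦ ∂(H^N)(ξ₂ + t (ξ₁ - ξ₂)) (ξ₁ - ξ₂)` is nonnegative by the Hessian lower bound, and if
`‖ξ₂‖ ≤ ‖ξ₁‖` then on `[3/4, 1]` the segment stays at distance `≥ (‖ξ₁‖ + ‖ξ₂‖)/4` from the origin,
which produces the factor `(‖ξ₁‖ + ‖ξ₂‖)^(N-2)`. The remaining pairs (antiparallel ones) are limits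
of pairs of the first kind, because `N ≥ 2` and `a` is continuous away from the origin.
-/

open Metric Set

section Normed

variable {F : Type*} [NormedAddCommGroup F] [NormedSpace ℝ F]

theorem hasFDerivAt_fderiv_of_contDiffOn {f : F → ℝ} {s : Set F} (hf : ContDiffOn ℝ 2 f s)
    (hs : IsOpen s) {z : F} (hz : z ∈ s) :
    HasFDerivAt (fderiv ℝ f) (fderiv ℝ (fderiv ℝ f) z) z :=
  (((hf.contDiffAt (hs.mem_nhds hz)).fderiv_right (m := 1) le_rfl).differentiableAt
    one_ne_zero).hasFDerivAt

theorem hasDerivAt_apply_add_smul {g : F → F →L[ℝ] ℝ} {g' : F →L[ℝ] F →L[ℝ] ℝ}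
    {x v : F} {t : ℝ} (hg : HasFDerivAt g g' (x + t • v)) (w : F) :
    HasDerivAt (fun s : ℝ => g (x + s • v) w) (g' v w) t := by
  have hline : HasDerivAt (fun s : ℝ => x + s • v) v t :=
    ((hasDerivAt_id t).smul_const v).const_add x |>.congr_deriv (one_smul ℝ v)
  exact (ContinuousLinearMap.apply ℝ ℝ w).hasFDerivAt.comp_hasDerivAt t
    (hg.comp_hasDerivAt t hline)

theorem mul_sub_le_sub_of_le_hasDerivAt {φ φ' : ℝ → ℝ} {x y m : ℝ} (hxy : x ≤ y)
    (hφ : ∀ t ∈ Icc x y, HasDerivAt φ (φ' t) t) (hm : ∀ t ∈ Icc x y, m ≤ φ' t) :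
    m * (y - x) ≤ φ y - φ x := by
  refine (convex_Icc x y).mul_sub_le_image_sub_of_le_deriv
    (fun t ht => (hφ t ht).continuousAt.continuousWithinAt)
    (fun t ht => (hφ t (interior_subset ht)).differentiableAt.differentiableWithinAt)
    (fun t ht => (hφ t (interior_subset ht)).deriv ▸ hm t (interior_subset ht))
    x (left_mem_Icc.2 hxy) y (right_mem_Icc.2 hxy) hxy

theorem add_norm_div_four_le_norm_add_smul_sub {x y : F} (hxy : ‖y‖ ≤ ‖x‖) {t : ℝ}
    (ht : t ∈ Icc (3 / 4 : ℝ) 1) : (‖x‖ + ‖y‖) / 4 ≤ ‖y + t • (x - y)‖ := by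
  obtain ⟨ht₀, ht₁⟩ := ht
  have hrev : ‖t • x‖ - ‖(1 - t) • y‖ ≤ ‖y + t • (x - y)‖ := by
    have hsplit : y + t • (x - y) = t • x - -((1 - t) • y) := by module
    rw [hsplit, ← norm_neg ((1 - t) • y)]
    exact norm_sub_norm_le _ _
  rw [norm_smul, norm_smul, Real.norm_of_nonneg (by linarith),
    Real.norm_of_nonneg (by linarith)] at hrev
  nlinarith [norm_nonneg y]

theorem norm_le_add_norm_of_mem_segment {x y z : F} (hz : z ∈ segment ℝ y x) :
    ‖z‖ ≤ ‖x‖ + ‖y‖ := by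
  have hball := (convex_closedBall (0 : F) (‖x‖ + ‖y‖)).segment_subset
    (mem_closedBall_zero_iff.2 (le_add_of_nonneg_left (norm_nonneg x)))
    (mem_closedBall_zero_iff.2 (le_add_of_nonneg_right (norm_nonneg y))) hz
  exact mem_closedBall_zero_iff.1 hball

variable {f : F → ℝ} (hf : ContDiffOn ℝ 2 f {0}ᶜ) (k : ℕ) {x y : F}
  (hseg : (0 : F) ∉ segment ℝ y x)
include hf hseg

theorem le_fderiv_sub_apply_of_le_hessian {m : ℝ} (hm : 0 ≤ m)
    (hlb : ∀ z ≠ 0, ∀ v, m * ‖z‖ ^ k * ‖v‖ ^ 2 ≤ fderiv ℝ (fderiv ℝ f) z v v) :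
    m / 4 ^ (k + 1) * (‖x‖ + ‖y‖) ^ k * ‖x - y‖ ^ 2 ≤
      fderiv ℝ f x (x - y) - fderiv ℝ f y (x - y) := by
  wlog hxy : ‖y‖ ≤ ‖x‖ generalizing x y
  · have hyx := this (segment_symm ℝ y x ▸ hseg) (le_of_not_ge hxy)
    rw [add_comm ‖y‖, norm_sub_rev, ← neg_sub x y, map_neg, map_neg] at hyx
    linarith
  set η := x - y
  have hne : ∀ t ∈ Icc (0 : ℝ) 1, y + t • η ≠ 0 := fun t ht h =>
    hseg (segment_eq_image' ℝ y x ▸ ⟨t, ht, h⟩)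
  set φ : ℝ → ℝ := fun t => fderiv ℝ f (y + t • η) η
  have hφ : ∀ t ∈ Icc (0 : ℝ) 1, HasDerivAt φ (fderiv ℝ (fderiv ℝ f) (y + t • η) η η) t :=
    fun t ht => hasDerivAt_apply_add_smul
      (hasFDerivAt_fderiv_of_contDiffOn hf isOpen_compl_singleton (hne t ht)) η
  have hφ₀ : 0 * (3 / 4 - 0) ≤ φ (3 / 4) - φ 0 :=
    mul_sub_le_sub_of_le_hasDerivAt (by norm_num)
      (fun t ht => hφ t ⟨ht.1, by linarith [ht.2]⟩)
      (fun t ht => le_trans (b := m * ‖y + t • η‖ ^ k * ‖η‖ ^ 2) (by positivity)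
        (hlb _ (hne t ⟨ht.1, by linarith [ht.2]⟩) η))
  have hφ₁ : m * ((‖x‖ + ‖y‖) / 4) ^ k * ‖η‖ ^ 2 * (1 - 3 / 4) ≤ φ 1 - φ (3 / 4) :=
    mul_sub_le_sub_of_le_hasDerivAt (by norm_num)
      (fun t ht => hφ t ⟨by linarith [ht.1], ht.2⟩)
      (fun t ht => le_trans (by gcongr; exact add_norm_div_four_le_norm_add_smul_sub hxy ht)
        (hlb _ (hne t ⟨by linarith [ht.1], ht.2⟩) η))
  calc m / 4 ^ (k + 1) * (‖x‖ + ‖y‖) ^ k * ‖η‖ ^ 2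
      = m * ((‖x‖ + ‖y‖) / 4) ^ k * ‖η‖ ^ 2 * (1 - 3 / 4) := by
        rw [div_pow, pow_succ]; ring
    _ ≤ φ 1 - φ 0 := by linarith
    _ = fderiv ℝ f x η - fderiv ℝ f y η := by simp [φ, η]

theorem norm_fderiv_sub_le_of_norm_hessian_le {M : ℝ} (hM : 0 ≤ M)
    (hub : ∀ z ≠ 0, ‖fderiv ℝ (fderiv ℝ f) z‖ ≤ M * ‖z‖ ^ k) :
    ‖fderiv ℝ f x - fderiv ℝ f y‖ ≤ M * (‖x‖ + ‖y‖) ^ k * ‖x - y‖ := by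
  have hne : ∀ z ∈ segment ℝ y x, z ≠ 0 := fun z hz h => hseg (h ▸ hz)
  refine (convex_segment y x).norm_image_sub_le_of_norm_hasFDerivWithin_le
    (fun z hz => (hasFDerivAt_fderiv_of_contDiffOn hf isOpen_compl_singleton
      (hne z hz)).hasFDerivWithinAt)
    (fun z hz => (hub z (hne z hz)).trans ?_)
    (left_mem_segment ℝ y x) (right_mem_segment ℝ y x)
  gcongr
  exact norm_le_add_norm_of_mem_segment hz

end Normed

section InnerProduct

variable {E : Type*} [NormedAddCommGroup E] [InnerProductSpace ℝ E]

theorem OrthonormalBasis.norm_le_sum_abs_apply {ι : Type*} [Fintype ι]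
    (b : OrthonormalBasis ι ℝ E) (L : E →L[ℝ] E →L[ℝ] ℝ) :
    ‖L‖ ≤ ∑ i, ∑ j, |L (b i) (b j)| := by
  refine L.opNorm_le_bound₂ (by positivity) fun v w => ?_
  have hexp : L v w = ∑ i, ∑ j, inner ℝ (b i) v * inner ℝ (b j) w * L (b i) (b j) := by
    conv_lhs => rw [← b.sum_repr' v, ← b.sum_repr' w]
    simp only [map_sum, map_smul, FunLike.coe_sum, Finset.sum_apply,
      FunLike.coe_smul, Pi.smul_apply, smul_eq_mul, Finset.mul_sum]
    rw [Finset.sum_comm]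
    exact Finset.sum_congr rfl fun i _ => Finset.sum_congr rfl fun j _ => by ring
  have hcoord (i : ι) (u : E) : |inner ℝ (b i) u| ≤ ‖u‖ :=
    (abs_real_inner_le_norm _ _).trans (by simp)
  rw [hexp, Real.norm_eq_abs, mul_assoc, Finset.sum_mul]
  refine (Finset.abs_sum_le_sum_abs _ _).trans (Finset.sum_le_sum fun i _ => ?_)
  rw [Finset.sum_mul]
  refine (Finset.abs_sum_le_sum_abs _ _).trans (Finset.sum_le_sum fun j _ => ?_)
  rw [abs_mul, abs_mul, mul_comm |L (b i) (b j)|]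
  gcongr
  exacts [hcoord i v, hcoord j w]

theorem dense_setOf_zero_notMem_segment [FiniteDimensional ℝ E]
    (hrank : 1 < Module.finrank ℝ E) {x : E} (hx : x ≠ 0) :
    Dense {y : E | (0 : E) ∉ segment ℝ y x} := by
  refine (interior_eq_empty_iff_dense_compl (s := {y | (0 : E) ∈ segment ℝ y x})).1 ?_
  have hspan : {y | (0 : E) ∈ segment ℝ y x} ⊆ (ℝ ∙ x : Submodule ℝ E) := by
    rintro y ⟨s, t, hs, ht, hst, h0⟩
    have hs0 : s ≠ 0 := by
      rintro rfl
      simp_all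
    refine Submodule.mem_span_singleton.2 ⟨-t / s, ?_⟩
    rw [div_eq_inv_mul, mul_smul, neg_smul, ← eq_neg_of_add_eq_zero_left h0,
      inv_smul_smul₀ hs0]
  have hproper : (ℝ ∙ x : Submodule ℝ E) ≠ ⊤ := fun h => by
    have := finrank_span_singleton (K := ℝ) hx
    rw [h, finrank_top] at this
    omega
  refine subset_eq_empty (interior_mono hspan) ?_
  by_contra hne
  exact hproper ((ℝ ∙ x).eq_top_of_nonempty_interior' (nonempty_iff_ne_empty.2 hne))

variable [CompleteSpace E]

theorem toDual_smul_pow_smul_gradient {H : E → ℝ} {ξ : E} (hH : DifferentiableAt ℝ H ξ)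
    (n : ℕ) : InnerProductSpace.toDual ℝ E ((n : ℝ) • H ξ ^ (n - 1) • gradient H ξ) =
      fderiv ℝ (fun x => H x ^ n) ξ := by
  have hpow : HasFDerivAt (fun x => H x ^ n) (((n : ℝ) * H ξ ^ (n - 1)) • fderiv ℝ H ξ) ξ :=
    (hasDerivAt_pow n (H ξ)).comp_hasFDerivAt ξ hH.hasFDerivAt
  rw [hpow.fderiv, smul_smul, map_smul, gradient, LinearIsometryEquiv.apply_symm_apply]

theorem ContDiffAt.continuousAt_pow_smul_gradient {H : E → ℝ} {ξ : E} (hH : ContDiffAt ℝ 1 H ξ)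
    (n : ℕ) : ContinuousAt (fun x => H x ^ n • gradient H x) ξ :=
  (hH.continuousAt.pow n).smul ((InnerProductSpace.toDual ℝ E).symm.continuous.continuousAt.comp
    (hH.continuousAt_fderiv one_ne_zero))

theorem inner_sub_ge_and_norm_sub_le_of_zero_notMem_segment {f : E → ℝ}
    (hf : ContDiffOn ℝ 2 f {0}ᶜ) {a : E → E} {n : ℝ} (hn : 0 < n)
    (hfa : ∀ ξ ≠ 0, InnerProductSpace.toDual ℝ E (n • a ξ) = fderiv ℝ f ξ) (k : ℕ) {m M : ℝ}
    (hm : 0 ≤ m) (hM : 0 ≤ M)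
    (hlb : ∀ z ≠ 0, ∀ v, m * ‖z‖ ^ k * ‖v‖ ^ 2 ≤ fderiv ℝ (fderiv ℝ f) z v v)
    (hub : ∀ z ≠ 0, ‖fderiv ℝ (fderiv ℝ f) z‖ ≤ M * ‖z‖ ^ k)
    ⦃x y : E⦄ (hseg : (0 : E) ∉ segment ℝ y x) :
    m / 4 ^ (k + 1) / n * (‖x‖ + ‖y‖) ^ k * ‖x - y‖ ^ 2 ≤ inner ℝ (a x - a y) (x - y) ∧
      ‖a x - a y‖ ≤ M / n * (‖x‖ + ‖y‖) ^ k * ‖x - y‖ := by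
  have hx : x ≠ 0 := fun h => hseg (h ▸ right_mem_segment ℝ y x)
  have hy : y ≠ 0 := fun h => hseg (h ▸ left_mem_segment ℝ y x)
  have hdiff :
      InnerProductSpace.toDual ℝ E (n • (a x - a y)) = fderiv ℝ f x - fderiv ℝ f y := by
    rw [smul_sub, map_sub, hfa x hx, hfa y hy]
  have hlow := le_fderiv_sub_apply_of_le_hessian hf k hseg hm hlb
  have hup := norm_fderiv_sub_le_of_norm_hessian_le hf k hseg hM hub
  rw [← sub_apply, ← hdiff, InnerProductSpace.toDual_apply_apply,
    real_inner_smul_left] at hlow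
  rw [← hdiff, LinearIsometryEquiv.norm_map, norm_smul, Real.norm_of_nonneg hn.le] at hup
  constructor
  · rw [div_mul_eq_mul_div, div_mul_eq_mul_div, div_le_iff₀ hn]
    linarith
  · rw [div_mul_eq_mul_div, div_mul_eq_mul_div, le_div_iff₀ hn]
    linarith

end InnerProduct

theorem stmt6_general (N : ℕ) (hN : 2 ≤ N) (H : EuclideanSpace ℝ (Fin N) → ℝ)
    (hC2 : ContDiffOn ℝ 2 H ({0}ᶜ : Set (EuclideanSpace ℝ (Fin N))))
    (lam : ℝ) (hlam : 0 < lam)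
    (hhess_lb : ∀ ξ : EuclideanSpace ℝ (Fin N), ξ ≠ 0 → ∀ η,
      (1 / lam) * ‖ξ‖ ^ (N - 2) * ‖η‖ ^ 2 ≤
        (iteratedFDeriv ℝ 2 (fun x => (H x) ^ N) ξ) ![η, η])
    (hhess_ub : ∀ ξ : EuclideanSpace ℝ (Fin N), ξ ≠ 0 →
      ∑ i : Fin N, ∑ j : Fin N,
        |(iteratedFDeriv ℝ 2 (fun x => (H x) ^ N) ξ)
          ![EuclideanSpace.single i (1:ℝ), EuclideanSpace.single j (1:ℝ)]| ≤
        lam * ‖ξ‖ ^ (N - 2))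
    (a : EuclideanSpace ℝ (Fin N) → EuclideanSpace ℝ (Fin N))
    (ha : ∀ ξ, a ξ = (H ξ) ^ (N - 1) • gradient H ξ) :
    ∃ c₁ c₂ : ℝ, 0 < c₁ ∧ 0 < c₂ ∧
      ∀ ξ₁ ξ₂ : EuclideanSpace ℝ (Fin N), ξ₁ ≠ 0 → ξ₂ ≠ 0 →
        c₁ * (‖ξ₁‖ + ‖ξ₂‖) ^ (N - 2) * ‖ξ₁ - ξ₂‖ ^ 2 ≤
            (inner ℝ (a ξ₁ - a ξ₂) (ξ₁ - ξ₂) : ℝ) ∧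
        ‖a ξ₁ - a ξ₂‖ ≤ c₂ * (‖ξ₁‖ + ‖ξ₂‖) ^ (N - 2) * ‖ξ₁ - ξ₂‖ := by
  have hN₀ : (0 : ℝ) < N := by positivity
  have hH (ξ : EuclideanSpace ℝ (Fin N)) (hξ : ξ ≠ 0) : ContDiffAt ℝ 2 H ξ :=
    hC2.contDiffAt (isOpen_compl_singleton.mem_nhds hξ)
  have hfa (ξ : EuclideanSpace ℝ (Fin N)) (hξ : ξ ≠ 0) :
      InnerProductSpace.toDual ℝ _ ((N : ℝ) • a ξ) = fderiv ℝ (fun x => H x ^ N) ξ := by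
    rw [ha, toDual_smul_pow_smul_gradient ((hH ξ hξ).differentiableAt two_ne_zero)]
  have hlb (ξ : EuclideanSpace ℝ (Fin N)) (hξ : ξ ≠ 0) (η) : 1 / lam * ‖ξ‖ ^ (N - 2) * ‖η‖ ^ 2 ≤
      fderiv ℝ (fderiv ℝ fun x => H x ^ N) ξ η η := by
    simpa [iteratedFDeriv_two_apply] using hhess_lb ξ hξ η
  have hub (ξ : EuclideanSpace ℝ (Fin N)) (hξ : ξ ≠ 0) :
      ‖fderiv ℝ (fderiv ℝ fun x => H x ^ N) ξ‖ ≤ lam * ‖ξ‖ ^ (N - 2) := by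
    refine ((EuclideanSpace.basisFun (Fin N) ℝ).norm_le_sum_abs_apply _).trans ?_
    simpa [iteratedFDeriv_two_apply] using hhess_ub ξ hξ
  have hest := inner_sub_ge_and_norm_sub_le_of_zero_notMem_segment (hC2.pow N) hN₀ hfa (N - 2)
    (one_div_pos.2 hlam).le hlam.le hlb hub
  refine ⟨1 / lam / 4 ^ (N - 2 + 1) / N, lam / N, by positivity, by positivity,
    fun ξ₁ ξ₂ hξ₁ hξ₂ => ?_⟩
  have hdense : ξ₂ ∈ closure {ζ | (0 : EuclideanSpace ℝ (Fin N)) ∉ segment ℝ ζ ξ₁} :=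
    (dense_setOf_zero_notMem_segment (by rw [finrank_euclideanSpace_fin]; omega)
      hξ₁).closure_eq ▸ mem_univ ξ₂
  have ha_cont : ContinuousAt a ξ₂ :=
    funext ha ▸ ((hH ξ₂ hξ₂).of_le one_le_two).continuousAt_pow_smul_gradient (N - 1)
  exact ⟨ContinuousWithinAt.closure_le hdense (by fun_prop) (by fun_prop)
      fun ζ hζ => (hest hζ).1,
    ContinuousWithinAt.closure_le hdense (by fun_prop) (by fun_prop) fun ζ hζ => (hest hζ).2⟩

theorem stmt6 (N : ℕ) (hN : 2 ≤ N) (H : EuclideanSpace ℝ (Fin N) → ℝ)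
    (hcont : Continuous H) (hnonneg : ∀ ξ, 0 ≤ H ξ)
    (hhom : ∀ l : ℝ, 0 < l → ∀ ξ, H (l • ξ) = l * H ξ)
    (hconv : ConvexOn ℝ Set.univ H)
    (hpos : ∀ ξ ∈ sphere (0 : EuclideanSpace ℝ (Fin N)) 1, 0 < H ξ)
    (hC2 : ContDiffOn ℝ 2 H ({0}ᶜ : Set (EuclideanSpace ℝ (Fin N))))
    (lam : ℝ) (hlam : 0 < lam)
    (hhess_lb : ∀ ξ : EuclideanSpace ℝ (Fin N), ξ ≠ 0 → ∀ η,
      (1 / lam) * ‖ξ‖ ^ (N - 2) * ‖η‖ ^ 2 ≤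
        (iteratedFDeriv ℝ 2 (fun x => (H x) ^ N) ξ) ![η, η])
    (hhess_ub : ∀ ξ : EuclideanSpace ℝ (Fin N), ξ ≠ 0 →
      ∑ i : Fin N, ∑ j : Fin N,
        |(iteratedFDeriv ℝ 2 (fun x => (H x) ^ N) ξ)
          ![EuclideanSpace.single i (1:ℝ), EuclideanSpace.single j (1:ℝ)]| ≤
        lam * ‖ξ‖ ^ (N - 2))
    (a : EuclideanSpace ℝ (Fin N) → EuclideanSpace ℝ (Fin N))
    (ha : ∀ ξ, a ξ = (H ξ) ^ (N - 1) • gradient H ξ) :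
    ∃ c₁ c₂ : ℝ, 0 < c₁ ∧ 0 < c₂ ∧
      ∀ ξ₁ ξ₂ : EuclideanSpace ℝ (Fin N), ξ₁ ≠ 0 → ξ₂ ≠ 0 →
        c₁ * (‖ξ₁‖ + ‖ξ₂‖) ^ (N - 2) * ‖ξ₁ - ξ₂‖ ^ 2 ≤
            (inner ℝ (a ξ₁ - a ξ₂) (ξ₁ - ξ₂) : ℝ) ∧
        ‖a ξ₁ - a ξ₂‖ ≤ c₂ * (‖ξ₁‖ + ‖ξ₂‖) ^ (N - 2) * ‖ξ₁ - ξ₂‖ :=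
  stmt6_general N hN H hC2 lam hlam hhess_lb hhess_ub a ha
end

section
/- Trace comparison for matrix products (Lemma 2.9): let A be a symmetric positive definite N×N real matrix with smallest eigenvalue λ_min and largest eigenvalue λ_max, and let B be a symmetric N×N real matrix. Then trace(AB(AB)ᵀ) ≤ N·(λ_max/λ_min)²·trace((AB)²). -/
open Matrix

theorem stmt7 (N : ℕ) (A B : Matrix (Fin N) (Fin N) ℝ)
    (hA : A.IsSymm) (hB : B.IsSymm)
    (lmin lmax : ℝ) (hlmin : 0 < lmin)
    (hlo : ∀ v : Fin N → ℝ, lmin * (∑ i, v i ^ 2) ≤ v ⬝ᵥ A.mulVec v)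
    (hhi : ∀ v : Fin N → ℝ, v ⬝ᵥ A.mulVec v ≤ lmax * (∑ i, v i ^ 2)) :
    ((A * B) * (A * B)ᵀ).trace ≤ (N : ℝ) * (lmax / lmin) ^ 2 * ((A * B) * (A * B)).trace := by
  have hA' : A.IsHermitian := hA
  set U : Matrix (Fin N) (Fin N) ℝ := (hA'.eigenvectorUnitary : Matrix (Fin N) (Fin N) ℝ) with hUdef
  set lam : Fin N → ℝ := hA'.eigenvalues with hlam
  have hUU : star U * U = 1 := Unitary.coe_star_mul_self hA'.eigenvectorUnitary
  have hUU' : U * star U = 1 := Unitary.coe_mul_star_self hA'.eigenvectorUnitary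
  have hspec : A = U * diagonal lam * star U := by
    have := hA'.spectral_theorem
    simpa using this
  -- eigenvalue bounds
  have hnorm : ∀ i, ∑ j, (hA'.eigenvectorBasis i : EuclideanSpace ℝ (Fin N)) j ^ 2 = 1 := by
    intro i
    have h1 : ‖hA'.eigenvectorBasis i‖ = 1 := hA'.eigenvectorBasis.orthonormal.1 i
    rw [EuclideanSpace.norm_eq, Real.sqrt_eq_one] at h1
    simpa [Real.norm_eq_abs, sq_abs] using h1
  have hquad : ∀ i, (fun j => (hA'.eigenvectorBasis i : EuclideanSpace ℝ (Fin N)) j) ⬝ᵥ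
      A.mulVec (fun j => (hA'.eigenvectorBasis i : EuclideanSpace ℝ (Fin N)) j) = lam i := by
    intro i
    have hm : A.mulVec (fun j => (hA'.eigenvectorBasis i : EuclideanSpace ℝ (Fin N)) j)
        = fun j => lam i * (hA'.eigenvectorBasis i : EuclideanSpace ℝ (Fin N)) j := by
      have h := hA'.mulVec_eigenvectorBasis i
      ext j
      have := congrFun h j
      simpa using this
    rw [hm, dotProduct]
    rw [show ∑ j, (hA'.eigenvectorBasis i : EuclideanSpace ℝ (Fin N)) j *
        (lam i * (hA'.eigenvectorBasis i : EuclideanSpace ℝ (Fin N)) j)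
        = lam i * ∑ j, (hA'.eigenvectorBasis i : EuclideanSpace ℝ (Fin N)) j ^ 2 by
      rw [Finset.mul_sum]; exact Finset.sum_congr rfl fun j _ => by ring]
    rw [hnorm i, mul_one]
  have hlamlo : ∀ i, lmin ≤ lam i := by
    intro i
    have := hlo (fun j => (hA'.eigenvectorBasis i : EuclideanSpace ℝ (Fin N)) j)
    rw [hquad i, hnorm i, mul_one] at this
    exact this
  have hlamhi : ∀ i, lam i ≤ lmax := by
    intro i
    have := hhi (fun j => (hA'.eigenvectorBasis i : EuclideanSpace ℝ (Fin N)) j)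
    rw [hquad i, hnorm i, mul_one] at this
    exact this
  -- conjugated B
  set M : Matrix (Fin N) (Fin N) ℝ := star U * B * U with hMdef
  have hBM : B = U * M * star U := by
    have h : U * (star U * B * U) * star U = B := by
      calc U * (star U * B * U) * star U
          = (U * star U) * B * (U * star U) := by noncomm_ring
        _ = B := by rw [hUU', one_mul, mul_one]
    rw [hMdef]; exact h.symm
  have hMsymm : ∀ i j, M j i = M i j := by
    intro i j
    have h : Mᵀ = M := by
      rw [hMdef]
      have hUstar : star U = Uᵀ := rfl
      rw [hUstar, transpose_mul, transpose_mul, transpose_transpose, hB]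
      noncomm_ring
    exact congrFun (congrFun h i) j
  set D : Matrix (Fin N) (Fin N) ℝ := diagonal lam with hD
  have key1 : (A * B) * (A * B)ᵀ = U * (D * (M * M) * D) * star U := by
    have ht : (A * B)ᵀ = B * A := by rw [transpose_mul, hB, hA]
    rw [ht, hspec, hBM]
    calc (U * D * star U) * (U * M * star U) * ((U * M * star U) * (U * D * star U))
        = U * (D * ((star U * U) * M) * ((star U * U) * (M * ((star U * U) * D)))) * star U := by
          noncomm_ring
      _ = U * (D * (M * M) * D) * star U := by rw [hUU]; noncomm_ring
  have key2 : (A * B) * (A * B) = U * (D * (M * (D * M))) * star U := by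
    rw [hspec, hBM]
    calc (U * D * star U) * (U * M * star U) * ((U * D * star U) * (U * M * star U))
        = U * (D * ((star U * U) * M) * ((star U * U) * (D * ((star U * U) * M)))) * star U := by
          noncomm_ring
      _ = U * (D * (M * (D * M))) * star U := by rw [hUU]; noncomm_ring
  have tr_conj : ∀ X : Matrix (Fin N) (Fin N) ℝ, (U * X * star U).trace = X.trace := by
    intro X
    rw [trace_mul_cycle, hUU, one_mul]
  have tr1 : ((A * B) * (A * B)ᵀ).trace = ∑ i, ∑ j, lam i ^ 2 * M i j ^ 2 := by
    rw [key1, tr_conj, trace]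
    apply Finset.sum_congr rfl
    intro i _
    rw [diag_apply, hD, mul_diagonal, diagonal_mul, mul_apply, Finset.mul_sum, Finset.sum_mul]
    apply Finset.sum_congr rfl
    intro j _
    rw [hMsymm i j]; ring
  have tr2 : ((A * B) * (A * B)).trace = ∑ i, ∑ j, (lam i * lam j) * M i j ^ 2 := by
    rw [key2, tr_conj, trace]
    apply Finset.sum_congr rfl
    intro i _
    rw [diag_apply, hD, diagonal_mul, mul_apply, Finset.mul_sum]
    apply Finset.sum_congr rfl
    intro j _
    rw [diagonal_mul, hMsymm i j]; ring
  have tr2nonneg : 0 ≤ ((A * B) * (A * B)).trace := by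
    rw [tr2]
    apply Finset.sum_nonneg; intro i _
    apply Finset.sum_nonneg; intro j _
    have h1 : 0 < lam i := lt_of_lt_of_le hlmin (hlamlo i)
    have h2 : 0 < lam j := lt_of_lt_of_le hlmin (hlamlo j)
    positivity
  have step : ((A * B) * (A * B)ᵀ).trace ≤ (lmax / lmin) ^ 2 * ((A * B) * (A * B)).trace := by
    rw [tr1, tr2, Finset.mul_sum]
    apply Finset.sum_le_sum; intro i _
    rw [Finset.mul_sum]
    apply Finset.sum_le_sum; intro j _
    have h1 := hlamlo i; have h2 := hlamhi i
    have h3 := hlamlo j; have h4 := hlamhi j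
    rw [div_pow, div_mul_eq_mul_div, le_div_iff₀ (by positivity)]
    have e1 : lam i ^ 2 ≤ lmax ^ 2 := by nlinarith
    have e2 : lmin ^ 2 ≤ lam i * lam j := by nlinarith
    have e3 : lam i ^ 2 * lmin ^ 2 ≤ lmax ^ 2 * (lam i * lam j) :=
      mul_le_mul e1 e2 (by positivity) (by nlinarith)
    nlinarith [mul_le_mul_of_nonneg_right e3 (sq_nonneg (M i j))]
  rcases Nat.eq_zero_or_pos N with hN | hN
  · subst hN
    simp [trace]
  · calc ((A * B) * (A * B)ᵀ).trace ≤ (lmax / lmin) ^ 2 * ((A * B) * (A * B)).trace := step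
      _ ≤ (N : ℝ) * ((lmax / lmin) ^ 2 * ((A * B) * (A * B)).trace) := by
          apply le_mul_of_one_le_left
          · positivity
          · exact_mod_cast hN
      _ = (N : ℝ) * (lmax / lmin) ^ 2 * ((A * B) * (A * B)).trace := by ring
end

section
/- ODE analysis of the mass function: let N ≥ 2, B > 0, t₀ ∈ ℝ, and suppose M : (−∞, t₀] → [0,∞) is C¹, satisfies M(t₀) = 0, M(t) > 0 for t < t₀, and M'(t) = ((N−1)/N)·M(t) − ((N−1)/N)·B·M(t)^{(N−2)/(N−1)} for t < t₀. Then M(t) = [B·(1 − e^{(t−t₀)/N})]^{N−1} for all t ≤ t₀. -/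
/-!
With `u = M ^ (1 / (N - 1))` the mass equation becomes the linear equation `u' = (u - B) / N`,
so `exp (-t / N) * (u t - B)` is constant on `(-∞, t₀]`; the terminal value `u t₀ = 0` fixes
`u t = B * (1 - exp ((t - t₀) / N))`, and `M = u ^ (N - 1)`.
-/

open Real Set

theorem eq_add_mul_exp_of_hasDerivAt_mul_sub {u : ℝ → ℝ} {a B t₀ : ℝ}
    (hcont : ContinuousOn u (Iic t₀)) (hderiv : ∀ s < t₀, HasDerivAt u (a * (u s - B)) s) :
    ∀ t ≤ t₀, u t = B + (u t₀ - B) * exp (a * (t - t₀)) := by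
  let H : ℝ → ℝ := fun t => exp (-(a * t)) * (u t - B)
  have hH : ∀ s < t₀, HasDerivAt H 0 s := fun s hs => by
    have hexp : HasDerivAt (fun t => exp (-(a * t))) (exp (-(a * s)) * -(a * 1)) s :=
      ((hasDerivAt_id' s).const_mul a).fun_neg.exp
    exact (hexp.fun_mul ((hderiv s hs).sub_const B)).congr_deriv (by ring)
  intro t ht
  have hHcont : ContinuousOn H (Icc t t₀) :=
    ((continuous_const.mul continuous_id).neg.rexp.continuousOn).mul
      ((hcont.mono Icc_subset_Iic_self).sub continuousOn_const)
  have hconst := constant_of_has_deriv_right_zero hHcont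
    fun x hx => (hH x hx.2).hasDerivWithinAt
  have hHt₀ := hconst t₀ ⟨ht, le_rfl⟩
  simp only [H] at hHt₀
  have hexp : exp (a * (t - t₀)) = exp (-(a * t₀)) / exp (-(a * t)) := by
    rw [← exp_sub]; ring_nf
  rw [hexp]
  field_simp
  linarith

theorem hasDerivAt_rpow_inv_sub_one_of_massODE {M : ℝ → ℝ} {n B s : ℝ} (hn : n - 1 ≠ 0)
    (hM : 0 < M s)
    (hderiv : HasDerivAt M ((n - 1) / n * M s - (n - 1) / n * B * M s ^ ((n - 2) / (n - 1))) s) :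
    HasDerivAt (fun t => M t ^ (n - 1)⁻¹) (n⁻¹ * (M s ^ (n - 1)⁻¹ - B)) s := by
  refine (hderiv.rpow_const (Or.inl hM.ne')).congr_deriv ?_
  have hlin : M s * M s ^ ((n - 1)⁻¹ - 1) = M s ^ (n - 1)⁻¹ := by
    rw [← rpow_one_add' hM.le (by simpa using hn)]; ring_nf
  have hconst : M s ^ ((n - 2) / (n - 1)) * M s ^ ((n - 1)⁻¹ - 1) = 1 := by
    rw [← rpow_add hM, show (n - 2) / (n - 1) + ((n - 1)⁻¹ - 1) = 0 by field_simp; ring,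
      rpow_zero]
  have hcoef : (n - 1) / n * (n - 1)⁻¹ = n⁻¹ := by field_simp
  calc ((n - 1) / n * M s - (n - 1) / n * B * M s ^ ((n - 2) / (n - 1))) * (n - 1)⁻¹ *
        M s ^ ((n - 1)⁻¹ - 1)
      = (n - 1) / n * (n - 1)⁻¹ * (M s * M s ^ ((n - 1)⁻¹ - 1) -
          B * (M s ^ ((n - 2) / (n - 1)) * M s ^ ((n - 1)⁻¹ - 1))) := by ring
    _ = n⁻¹ * (M s ^ (n - 1)⁻¹ - B) := by rw [hlin, hconst, hcoef, mul_one]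

theorem stmt14_general (N : ℕ) (hN : 2 ≤ N) (B t₀ : ℝ)
    (M : ℝ → ℝ) (hcont : ContinuousOn M (Set.Iic t₀))
    (hM0 : M t₀ = 0) (hpos : ∀ t < t₀, 0 < M t)
    (hderiv : ∀ t < t₀, HasDerivAt M
      (((N : ℝ) - 1) / N * M t -
        ((N : ℝ) - 1) / N * B * (M t) ^ (((N : ℝ) - 2) / ((N : ℝ) - 1))) t) :
    ∀ t ≤ t₀, M t = (B * (1 - Real.exp ((t - t₀) / N))) ^ ((N : ℝ) - 1) := by
  intro t ht
  have hN1 : (0 : ℝ) < N - 1 := by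
    have : (2 : ℝ) ≤ N := by exact_mod_cast hN
    linarith
  have hu := eq_add_mul_exp_of_hasDerivAt_mul_sub
    (hcont.rpow_const fun _ _ => Or.inr (inv_pos.2 hN1).le)
    (fun s hs => hasDerivAt_rpow_inv_sub_one_of_massODE hN1.ne' (hpos s hs) (hderiv s hs)) t ht
  have hMt : 0 ≤ M t := ht.eq_or_lt.elim (fun h => h ▸ hM0.ge) fun h => (hpos t h).le
  rw [← rpow_inv_rpow hMt hN1.ne', hu, hM0, zero_rpow (inv_pos.2 hN1).ne']
  ring_nf

theorem stmt14 (N : ℕ) (hN : 2 ≤ N) (B t₀ : ℝ) (hB : 0 < B)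
    (M : ℝ → ℝ) (hcont : ContinuousOn M (Set.Iic t₀))
    (hM0 : M t₀ = 0) (hpos : ∀ t < t₀, 0 < M t)
    (hderiv : ∀ t < t₀, HasDerivAt M
      (((N : ℝ) - 1) / N * M t -
        ((N : ℝ) - 1) / N * B * (M t) ^ (((N : ℝ) - 2) / ((N : ℝ) - 1))) t) :
    ∀ t ≤ t₀, M t = (B * (1 - Real.exp ((t - t₀) / N))) ^ ((N : ℝ) - 1) :=
  stmt14_general N hN B t₀ M hcont hM0 hpos hderiv
end
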